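/- Let E be a Banach space with a normalized 1-unconditional basis (𝐞_i) and let 𝓕₁, 𝓕₂ be combinatorial families. (1) If (𝐞_i) is strictly 1-unconditional, then any permutation π of ℕ that induces an isometry J : X_{𝓕₁,E} → X_{𝓕₂,E} via Je_i = e_{π(i)} must satisfy π(𝓕₁) = 𝓕₂. (2) If (𝐞_i) is both strictly 1-unconditional and 1-symmetric, then any permutation π of ℕ that induces an isometry J : Z_{𝓕₁,E} → Z_{𝓕₂,E} via Je_i^* = e_{π(i)}^* must satisfy π(𝓕₁) = 𝓕₂. -/

import Mathlib

open Filter Topology NormedSpace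

noncomputable section

/-- A combinatorial family: a family of finite subsets of `ℕ` containing all
singletons and hereditary for inclusion. -/
def IsCombFamily (𝓕 : Set (Finset ℕ)) : Prop :=
  (∀ n : ℕ, ({n} : Finset ℕ) ∈ 𝓕) ∧ ∀ F ∈ 𝓕, ∀ G : Finset ℕ, G ⊆ F → G ∈ 𝓕

/-- A family of finite subsets of `ℕ` is compact if it is closed in `{0,1}^ℕ`,
identifying sets with their characteristic functions. -/
def IsCompactFamily (𝓕 : Set (Finset ℕ)) : Prop :=
  IsClosed {f : ℕ → Bool | ∃ F ∈ 𝓕, ∀ n, f n = true ↔ n ∈ F}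

/-- The closure of the family `𝓕` in `{0,1}^ℕ`: all sets every finite subset of
which belongs to `𝓕`. -/
def famClosure (𝓕 : Set (Finset ℕ)) : Set (Set ℕ) :=
  {A | ∀ G : Finset ℕ, ↑G ⊆ A → G ∈ 𝓕}

/-- Maximal elements of a family. -/
def famMax (𝓕 : Set (Finset ℕ)) : Set (Finset ℕ) :=
  {F | F ∈ 𝓕 ∧ ∀ G ∈ 𝓕, F ⊆ G → F = G}

/-- A spreading family. -/
def IsSpreading (𝓕 : Set (Finset ℕ)) : Prop :=
  ∀ F ∈ 𝓕, ∀ σ : ℕ → ℕ, (∀ n ∈ F, n ≤ σ n) → Finset.image σ F ∈ 𝓕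

/-- `X`, with distinguished sequence `e`, is (a realization of) the `p`-convexification
`X_{𝓕,p}` of the combinatorial Banach space associated with `𝓕`: the canonical vectors
have dense linear span, and finitely supported vectors have the norm
`sup { (∑_{i∈F} |a i|^p)^{1/p} : F ∈ 𝓕 }`. -/
structure IsXFp (𝕜 : Type*) [RCLike 𝕜] (𝓕 : Set (Finset ℕ)) (p : ℝ)
    (X : Type*) [NormedAddCommGroup X] [NormedSpace 𝕜 X] (e : ℕ → X) : Prop where
  dense_span : Dense (Submodule.span 𝕜 (Set.range e) : Set X)
  norm_eq : ∀ a : ℕ →₀ 𝕜,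
    ‖∑ i ∈ a.support, a i • e i‖ =
      sSup {r : ℝ | ∃ F ∈ 𝓕, r = (∑ i ∈ F, ‖a i‖ ^ p) ^ (1 / p)}

/-- `(b, bs)` is a normalized 1-unconditional Schauder basis of `E` together with its
coordinate functionals. -/
structure IsNUBasis (𝕜 : Type*) [RCLike 𝕜] (E : Type*)
    [NormedAddCommGroup E] [NormedSpace 𝕜 E]
    (b : ℕ → E) (bs : ℕ → StrongDual 𝕜 E) : Prop where
  biortho : ∀ i j, bs i (b j) = if i = j then 1 else 0
  normalized : ∀ i, ‖b i‖ = 1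
  expansion : ∀ x : E,
    Tendsto (fun N => ∑ i ∈ Finset.range N, bs i x • b i) atTop (nhds x)
  unconditional : ∀ a : ℕ →₀ 𝕜, ∀ ω : ℕ → 𝕜, (∀ i, ‖ω i‖ = 1) →
    ‖∑ i ∈ a.support, ω i • a i • b i‖ = ‖∑ i ∈ a.support, a i • b i‖

/-- `X`, with distinguished sequence `e`, is (a realization of) `X_{𝓕,E}`. -/
structure IsXFE (𝕜 : Type*) [RCLike 𝕜] (𝓕 : Set (Finset ℕ))
    (E : Type*) [NormedAddCommGroup E] [NormedSpace 𝕜 E] (b : ℕ → E)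
    (X : Type*) [NormedAddCommGroup X] [NormedSpace 𝕜 X] (e : ℕ → X) : Prop where
  dense_span : Dense (Submodule.span 𝕜 (Set.range e) : Set X)
  norm_eq : ∀ a : ℕ →₀ 𝕜,
    ‖∑ i ∈ a.support, a i • e i‖ =
      sSup {r : ℝ | ∃ F ∈ 𝓕, r = ‖∑ i ∈ F, a i • b i‖}

/-- A normed space is strictly convex if its unit sphere contains no nontrivial
segments. -/
def IsStrictlyConvexSp (Y : Type*) [NormedAddCommGroup Y] : Prop :=
  ∀ u v : Y, ‖u‖ = 1 → ‖v‖ = 1 → u ≠ v → ‖u + v‖ < 2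

/-- `x` is an extreme point of the closed unit ball of `Y`. -/
def IsExtremePtBall {Y : Type*} [NormedAddCommGroup Y] (x : Y) : Prop :=
  ‖x‖ ≤ 1 ∧ ∀ u v : Y, ‖u‖ ≤ 1 → ‖v‖ ≤ 1 → u + v = x + x → u = x ∧ v = x

/-- `x` is an extreme point of the closed unit ball of the subspace `M`. -/
def IsExtremePtBallIn {𝕜 Y : Type*} [RCLike 𝕜] [NormedAddCommGroup Y] [NormedSpace 𝕜 Y]
    (M : Submodule 𝕜 Y) (x : Y) : Prop :=
  x ∈ M ∧ ‖x‖ ≤ 1 ∧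
    ∀ u v : Y, u ∈ M → v ∈ M → ‖u‖ ≤ 1 → ‖v‖ ≤ 1 → u + v = x + x → u = x ∧ v = x

/-- The basis `b` is strictly 1-unconditional. -/
def StrictlyUnconditional (𝕜 : Type*) [RCLike 𝕜] {E : Type*}
    [NormedAddCommGroup E] [NormedSpace 𝕜 E] (b : ℕ → E) : Prop :=
  ∀ a c : ℕ →₀ 𝕜, (∀ i, ‖a i‖ ≤ ‖c i‖) → (∃ i, ‖a i‖ < ‖c i‖) →
    ‖∑ i ∈ c.support, a i • b i‖ < ‖∑ i ∈ c.support, c i • b i‖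

/-- The basis `b` is 1-symmetric: every permutation of `ℕ` induces a surjective
linear isometry of `E` permuting the basis vectors. -/
def IsSymmetricBasis (𝕜 : Type*) [RCLike 𝕜] {E : Type*}
    [NormedAddCommGroup E] [NormedSpace 𝕜 E] (b : ℕ → E) : Prop :=
  ∀ σ : Equiv.Perm ℕ, ∃ T : E ≃ₗᵢ[𝕜] E, ∀ i, T (b i) = b (σ i)

/-- Condition (H): for `j ≠ k`, any linear isometric embedding of `span(bs j, bs k)`
into the dual of `E` sends `bs j` and `bs k` to functionals with disjoint supports. -/
def CondH (𝕜 : Type*) [RCLike 𝕜] {E : Type*} [NormedAddCommGroup E] [NormedSpace 𝕜 E]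
    (b : ℕ → E) (bs : ℕ → StrongDual 𝕜 E) : Prop :=
  ∀ j k : ℕ, j ≠ k →
    ∀ T : ↥(Submodule.span 𝕜 {bs j, bs k}) →ₗᵢ[𝕜] StrongDual 𝕜 E,
      ∀ i : ℕ,
        T ⟨bs j, Submodule.subset_span (Set.mem_insert _ _)⟩ (b i) = 0 ∨
        T ⟨bs k, Submodule.subset_span (Set.mem_insert_of_mem _ rfl)⟩ (b i) = 0

/-- `span(u,v)` is isometrically equal to `ℓ₂(2)`. -/
def SpanIsL2 (𝕜 : Type*) [RCLike 𝕜] {Y : Type*} [NormedAddCommGroup Y] [NormedSpace 𝕜 Y]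
    (u v : Y) : Prop :=
  ∀ a c : 𝕜, ‖a • u + c • v‖ ^ 2 = ‖a‖ ^ 2 + ‖c‖ ^ 2

/-!
Write `1_F = ∑_{i∈F} e_i` and `1*_F = ∑_{i∈F} e_i^*`. Strict 1-unconditionality makes
`H ↦ ‖∑_{i∈H} 𝐞_i‖_E` strictly increasing, and the norm of `1_F` in `X_{𝓕,E}` is attained at
some `H ∈ 𝓕` with `H ⊆ F`. Hence `F ∈ 𝓕` iff `‖1_H‖ < ‖1_F‖` in `X_{𝓕,E}` for every `H ⊊ F`,
a condition that an isometry `e_i ↦ e_{π i}` transports.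

Dually, testing `1*_F` on `1_F` gives `|F| ≤ ‖1*_F‖ ‖1_F‖_X`, which is strictly less than
`‖1*_F‖ ‖∑_{i∈F} 𝐞_i‖_E` when `F ∉ 𝓕`; for `F ∈ 𝓕`, averaging over the cyclic permutations of `F`
(1-symmetry) gives `‖1*_F‖ ‖∑_{i∈F} 𝐞_i‖_E ≤ |F|`. Both factors of this criterion are invariant
under `π`: the first by the isometry of `Z_{𝓕,E}`, the second by 1-symmetry.
-/

section Indicator

variable {R M : Type*} [Semiring R] [AddCommMonoid M] [Module R M]

lemma sum_inter_support_smul (a : ℕ →₀ R) (F : Finset ℕ) (v : ℕ → M) :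
    ∑ i ∈ F ∩ a.support, a i • v i = ∑ i ∈ F, a i • v i :=
  Finset.sum_subset Finset.inter_subset_left fun i hiF hi => by
    simp [Finsupp.notMem_support_iff.mp fun h => hi (Finset.mem_inter.mpr ⟨hiF, h⟩)]

variable [Nontrivial R]

def indicatorFinsupp (R : Type*) [Semiring R] [Nontrivial R] (F : Finset ℕ) : ℕ →₀ R :=
  ⟨F, fun i => if i ∈ F then 1 else 0, fun i => by by_cases h : i ∈ F <;> simp [h]⟩

@[simp] lemma indicatorFinsupp_support (F : Finset ℕ) : (indicatorFinsupp R F).support = F := rfl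

lemma sum_indicatorFinsupp_smul (F G : Finset ℕ) (v : ℕ → M) :
    ∑ i ∈ G, indicatorFinsupp R F i • v i = ∑ i ∈ G ∩ F, v i := by
  rw [← Finset.sum_ite_mem G F v]
  refine Finset.sum_congr rfl fun i _ => ?_
  by_cases h : i ∈ F <;> simp [indicatorFinsupp, h]

lemma sum_support_indicatorFinsupp_smul (F : Finset ℕ) (v : ℕ → M) :
    ∑ i ∈ (indicatorFinsupp R F).support, indicatorFinsupp R F i • v i = ∑ i ∈ F, v i := by
  rw [indicatorFinsupp_support, sum_indicatorFinsupp_smul, Finset.inter_self]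

end Indicator

section Basis

variable {𝕜 : Type*} [RCLike 𝕜] {E : Type*} [NormedAddCommGroup E] [NormedSpace 𝕜 E]

lemma StrictlyUnconditional.norm_sum_lt {b : ℕ → E} (hsu : StrictlyUnconditional 𝕜 b)
    {H F : Finset ℕ} (hHF : H ⊂ F) : ‖∑ i ∈ H, b i‖ < ‖∑ i ∈ F, b i‖ := by
  obtain ⟨j, hjF, hjH⟩ := Finset.exists_of_ssubset hHF
  have key := hsu (indicatorFinsupp 𝕜 H) (indicatorFinsupp 𝕜 F)
    (fun i => by
      by_cases hi : i ∈ H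
      · simp [indicatorFinsupp, hi, hHF.subset hi]
      · simp [indicatorFinsupp, hi])
    ⟨j, by simp [indicatorFinsupp, hjF, hjH]⟩
  rwa [indicatorFinsupp_support, sum_indicatorFinsupp_smul, Finset.inter_eq_right.mpr hHF.subset,
    sum_indicatorFinsupp_smul, Finset.inter_self] at key

lemma StrictlyUnconditional.norm_sum_le {b : ℕ → E} (hsu : StrictlyUnconditional 𝕜 b)
    {H F : Finset ℕ} (hHF : H ⊆ F) : ‖∑ i ∈ H, b i‖ ≤ ‖∑ i ∈ F, b i‖ := by
  rcases hHF.eq_or_ssubset with rfl | hHF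
  · exact le_rfl
  · exact (hsu.norm_sum_lt hHF).le

lemma biorthogonal_sum_apply {Y : Type*} [NormedAddCommGroup Y] [NormedSpace 𝕜 Y]
    {v : ℕ → Y} {vs : ℕ → StrongDual 𝕜 Y}
    (hv : ∀ i j, vs i (v j) = if i = j then (1 : 𝕜) else 0) (F : Finset ℕ) (a : ℕ →₀ 𝕜) :
    (∑ i ∈ F, vs i) (∑ j ∈ a.support, a j • v j) = ∑ i ∈ F, a i := by
  rw [sum_apply]
  refine Finset.sum_congr rfl fun i _ => ?_
  simp only [map_sum, map_smul, hv, smul_eq_mul, mul_ite, mul_one, mul_zero, Finset.sum_ite_eq]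
  split_ifs with h
  · rfl
  · exact (Finsupp.notMem_support_iff.mp h).symm

lemma ContinuousLinearMap.opNorm_le_of_dense_span {Y : Type*} [NormedAddCommGroup Y]
    [NormedSpace 𝕜 Y] {v : ℕ → Y} (hv : Dense (Submodule.span 𝕜 (Set.range v) : Set Y))
    (f : StrongDual 𝕜 Y) {M : ℝ} (hM : 0 ≤ M)
    (h : ∀ a : ℕ →₀ 𝕜, ‖f (∑ i ∈ a.support, a i • v i)‖ ≤ M * ‖∑ i ∈ a.support, a i • v i‖) :
    ‖f‖ ≤ M := by
  refine f.opNorm_le_bound hM fun x => ?_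
  have hclosed : IsClosed {y : Y | ‖f y‖ ≤ M * ‖y‖} :=
    isClosed_le f.continuous.norm (continuous_const.mul continuous_norm)
  refine hclosed.closure_subset_iff.mpr (fun y hy => ?_) (hv x)
  obtain ⟨a, rfl⟩ := Finsupp.mem_span_range_iff_exists_finsupp.mp hy
  exact h a

end Basis

section CombinatorialSpace

variable {𝕜 : Type*} [RCLike 𝕜] {E : Type*} [NormedAddCommGroup E] [NormedSpace 𝕜 E]
  {b : ℕ → E} {𝓕 : Set (Finset ℕ)}
  {X : Type*} [NormedAddCommGroup X] [NormedSpace 𝕜 X] {e : ℕ → X}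

lemma IsCombFamily.empty_mem (h𝓕 : IsCombFamily 𝓕) : ∅ ∈ 𝓕 :=
  h𝓕.2 _ (h𝓕.1 0) ∅ (Finset.empty_subset _)

/-- Only the finitely many subsets of `a.support` matter, so the supremum defining the norm
of `X_{𝓕,E}` is a maximum. -/
lemma finite_setOf_norm_sum (𝓕 : Set (Finset ℕ)) (a : ℕ →₀ 𝕜) (b : ℕ → E) :
    {r : ℝ | ∃ F ∈ 𝓕, r = ‖∑ i ∈ F, a i • b i‖}.Finite := by
  refine (a.support.powerset.finite_toSet.image fun H => ‖∑ i ∈ H, a i • b i‖).subset ?_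
  rintro r ⟨F, -, rfl⟩
  exact ⟨F ∩ a.support, by simp, congrArg norm (sum_inter_support_smul a F b)⟩

lemma IsXFE.norm_sum_le (hX : IsXFE 𝕜 𝓕 E b X e) (a : ℕ →₀ 𝕜) {F : Finset ℕ} (hF : F ∈ 𝓕) :
    ‖∑ i ∈ F, a i • b i‖ ≤ ‖∑ i ∈ a.support, a i • e i‖ := by
  rw [hX.norm_eq]
  exact le_csSup (finite_setOf_norm_sum 𝓕 a b).bddAbove ⟨F, hF, rfl⟩

lemma IsXFE.exists_mem_norm_eq (hX : IsXFE 𝕜 𝓕 E b X e) (h𝓕 : IsCombFamily 𝓕)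
    (a : ℕ →₀ 𝕜) :
    ∃ H ∈ 𝓕, H ⊆ a.support ∧ ‖∑ i ∈ a.support, a i • e i‖ = ‖∑ i ∈ H, a i • b i‖ := by
  obtain ⟨F, hF, hmax⟩ := Set.Nonempty.csSup_mem
    (⟨_, ⟨∅, h𝓕.empty_mem, rfl⟩⟩ : {r : ℝ | ∃ F ∈ 𝓕, r = ‖∑ i ∈ F, a i • b i‖}.Nonempty)
    (finite_setOf_norm_sum 𝓕 a b)
  refine ⟨F ∩ a.support, h𝓕.2 F hF _ Finset.inter_subset_left, Finset.inter_subset_right, ?_⟩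
  rw [hX.norm_eq, hmax, sum_inter_support_smul]

lemma IsXFE.norm_sum_eq_of_mem (hsu : StrictlyUnconditional 𝕜 b) (hX : IsXFE 𝕜 𝓕 E b X e)
    (h𝓕 : IsCombFamily 𝓕) {F : Finset ℕ} (hF : F ∈ 𝓕) :
    ‖∑ i ∈ F, e i‖ = ‖∑ i ∈ F, b i‖ := by
  obtain ⟨H, -, hHF, hH⟩ := hX.exists_mem_norm_eq h𝓕 (indicatorFinsupp 𝕜 F)
  have hle := hX.norm_sum_le (indicatorFinsupp 𝕜 F) hF
  rw [indicatorFinsupp_support] at hHF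
  rw [sum_support_indicatorFinsupp_smul] at hH hle
  rw [sum_indicatorFinsupp_smul, Finset.inter_eq_left.mpr hHF] at hH
  rw [sum_indicatorFinsupp_smul, Finset.inter_self] at hle
  exact le_antisymm (hH ▸ hsu.norm_sum_le hHF) hle

lemma IsXFE.exists_ssubset_norm_sum_eq_of_notMem (hX : IsXFE 𝕜 𝓕 E b X e)
    (h𝓕 : IsCombFamily 𝓕) {F : Finset ℕ} (hF : F ∉ 𝓕) :
    ∃ H ∈ 𝓕, H ⊂ F ∧ ‖∑ i ∈ F, e i‖ = ‖∑ i ∈ H, b i‖ := by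
  obtain ⟨H, hH, hHF, hnorm⟩ := hX.exists_mem_norm_eq h𝓕 (indicatorFinsupp 𝕜 F)
  rw [indicatorFinsupp_support] at hHF
  rw [sum_support_indicatorFinsupp_smul, sum_indicatorFinsupp_smul,
    Finset.inter_eq_left.mpr hHF] at hnorm
  exact ⟨H, hH, hHF.ssubset_of_ne fun h => hF (h ▸ hH), hnorm⟩

lemma IsXFE.norm_sum_lt_of_notMem (hsu : StrictlyUnconditional 𝕜 b) (hX : IsXFE 𝕜 𝓕 E b X e)
    (h𝓕 : IsCombFamily 𝓕) {F : Finset ℕ} (hF : F ∉ 𝓕) :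
    ‖∑ i ∈ F, e i‖ < ‖∑ i ∈ F, b i‖ := by
  obtain ⟨H, -, hHF, hnorm⟩ := hX.exists_ssubset_norm_sum_eq_of_notMem h𝓕 hF
  exact hnorm ▸ hsu.norm_sum_lt hHF

lemma IsXFE.mem_iff_forall_ssubset_norm_sum_lt (hsu : StrictlyUnconditional 𝕜 b)
    (hX : IsXFE 𝕜 𝓕 E b X e) (h𝓕 : IsCombFamily 𝓕) (F : Finset ℕ) :
    F ∈ 𝓕 ↔ ∀ H ⊂ F, ‖∑ i ∈ H, e i‖ < ‖∑ i ∈ F, e i‖ := by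
  refine ⟨fun hF H hHF => ?_, fun h => by_contra fun hF => ?_⟩
  · rw [hX.norm_sum_eq_of_mem hsu h𝓕 hF, hX.norm_sum_eq_of_mem hsu h𝓕 (h𝓕.2 F hF H hHF.subset)]
    exact hsu.norm_sum_lt hHF
  · obtain ⟨H, hH, hHF, hnorm⟩ := hX.exists_ssubset_norm_sum_eq_of_notMem h𝓕 hF
    have := h H hHF
    rw [hnorm, hX.norm_sum_eq_of_mem hsu h𝓕 hH] at this
    exact lt_irrefl _ this

end CombinatorialSpace

section Duality

variable {𝕜 : Type*} [RCLike 𝕜] {E : Type*} [NormedAddCommGroup E] [NormedSpace 𝕜 E]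
  {b : ℕ → E} {𝓕 : Set (Finset ℕ)}
  {X : Type*} [NormedAddCommGroup X] [NormedSpace 𝕜 X] {e : ℕ → X}
  {eStar : ℕ → StrongDual 𝕜 X}

/-- The cyclic shifts of `F`, extended by the identity off `F`. -/
lemma exists_perms_sum_apply_eq {M : Type*} [AddCommMonoid M] (F : Finset ℕ) :
    ∃ σ : Fin F.card → Equiv.Perm ℕ, ∀ i ∈ F, ∀ f : ℕ → M, ∑ k, f (σ k i) = ∑ j ∈ F, f j := by
  rcases F.eq_empty_or_nonempty with rfl | hF
  · exact ⟨fun _ => 1, by simp⟩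
  have : NeZero F.card := ⟨(Finset.card_pos.mpr hF).ne'⟩
  let eF := F.equivFin
  refine ⟨fun k => Equiv.Perm.extendDomain
    ((eF.trans (Equiv.addRight k)).trans eF.symm) (Equiv.refl _), fun i hi f => ?_⟩
  simp only [Equiv.Perm.extendDomain_apply_subtype _ _ hi]
  calc ∑ k, f ↑(eF.symm (eF ⟨i, hi⟩ + k)) = ∑ m, f ↑(eF.symm m) :=
        Fintype.sum_equiv (Equiv.addLeft (eF ⟨i, hi⟩)) _ _ fun _ => rfl
    _ = ∑ j ∈ F, f j := by
        rw [← Finset.sum_coe_sort F f]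
        exact Equiv.sum_comp eF.symm fun j => f ↑j

/-- Averaging `∑ a i • b i` over isometries that permute `F` cyclically gives
`(∑ a i) • ∑ b i`. -/
lemma IsSymmetricBasis.norm_sum_mul_norm_sum_le (hsym : IsSymmetricBasis 𝕜 b) (F : Finset ℕ)
    (a : ℕ → 𝕜) : ‖∑ i ∈ F, a i‖ * ‖∑ i ∈ F, b i‖ ≤ F.card * ‖∑ i ∈ F, a i • b i‖ := by
  obtain ⟨σ, hσ⟩ := exists_perms_sum_apply_eq (M := E) F
  choose T hT using fun k => hsym (σ k)
  have hsum : ∑ k, T k (∑ i ∈ F, a i • b i) = (∑ i ∈ F, a i) • ∑ i ∈ F, b i := by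
    simp only [map_sum, map_smul, hT]
    rw [Finset.sum_comm, Finset.sum_smul]
    exact Finset.sum_congr rfl fun i hi => by rw [← Finset.smul_sum, hσ i hi]
  calc ‖∑ i ∈ F, a i‖ * ‖∑ i ∈ F, b i‖ = ‖∑ k, T k (∑ i ∈ F, a i • b i)‖ := by
        rw [hsum, norm_smul]
    _ ≤ ∑ k, ‖T k (∑ i ∈ F, a i • b i)‖ := norm_sum_le _ _
    _ = F.card * ‖∑ i ∈ F, a i • b i‖ := by
        simp only [LinearIsometryEquiv.norm_map, Finset.sum_const, Finset.card_univ,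
          Fintype.card_fin, nsmul_eq_mul]

lemma IsXFE.norm_sum_dual_mul_le_card (hsym : IsSymmetricBasis 𝕜 b) (hX : IsXFE 𝕜 𝓕 E b X e)
    (heStar : ∀ i j, eStar i (e j) = if i = j then (1 : 𝕜) else 0) {F : Finset ℕ}
    (hF : F ∈ 𝓕) : ‖∑ i ∈ F, eStar i‖ * ‖∑ i ∈ F, b i‖ ≤ F.card := by
  rcases (norm_nonneg (∑ i ∈ F, b i)).eq_or_lt with h0 | hpos
  · rw [← h0, mul_zero]
    positivity
  rw [← le_div_iff₀ hpos]
  refine ContinuousLinearMap.opNorm_le_of_dense_span hX.dense_span _ (by positivity) fun a => ?_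
  rw [biorthogonal_sum_apply heStar, div_mul_eq_mul_div, le_div_iff₀ hpos]
  calc ‖∑ i ∈ F, a i‖ * ‖∑ i ∈ F, b i‖ ≤ F.card * ‖∑ i ∈ F, a i • b i‖ :=
        hsym.norm_sum_mul_norm_sum_le F a
    _ ≤ F.card * ‖∑ i ∈ a.support, a i • e i‖ := by gcongr; exact hX.norm_sum_le a hF

lemma IsXFE.card_lt_norm_sum_dual_mul_of_notMem (hsu : StrictlyUnconditional 𝕜 b)
    (hX : IsXFE 𝕜 𝓕 E b X e) (h𝓕 : IsCombFamily 𝓕)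
    (heStar : ∀ i j, eStar i (e j) = if i = j then (1 : 𝕜) else 0) {F : Finset ℕ}
    (hF : F ∉ 𝓕) : F.card < ‖∑ i ∈ F, eStar i‖ * ‖∑ i ∈ F, b i‖ := by
  have heval : (∑ i ∈ F, eStar i) (∑ i ∈ F, e i) = F.card := by
    rw [← sum_support_indicatorFinsupp_smul (R := 𝕜) F e, biorthogonal_sum_apply heStar]
    simp [indicatorFinsupp]
  have hcard : (F.card : ℝ) ≤ ‖∑ i ∈ F, eStar i‖ * ‖∑ i ∈ F, e i‖ := by
    simpa [heval] using (∑ i ∈ F, eStar i).le_opNorm (∑ i ∈ F, e i)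
  have hcard_pos : 0 < (F.card : ℝ) := by
    rw [Nat.cast_pos, Finset.card_pos, Finset.nonempty_iff_ne_empty]
    rintro rfl
    exact hF h𝓕.empty_mem
  have hnorm_pos : 0 < ‖∑ i ∈ F, eStar i‖ :=
    pos_of_mul_pos_left (hcard_pos.trans_le hcard) (norm_nonneg _)
  calc (F.card : ℝ) ≤ ‖∑ i ∈ F, eStar i‖ * ‖∑ i ∈ F, e i‖ := hcard
    _ < ‖∑ i ∈ F, eStar i‖ * ‖∑ i ∈ F, b i‖ := by
        gcongr
        exact hX.norm_sum_lt_of_notMem hsu h𝓕 hF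

lemma IsXFE.mem_iff_norm_sum_dual_mul_le_card (hsu : StrictlyUnconditional 𝕜 b)
    (hsym : IsSymmetricBasis 𝕜 b) (hX : IsXFE 𝕜 𝓕 E b X e) (h𝓕 : IsCombFamily 𝓕)
    (heStar : ∀ i j, eStar i (e j) = if i = j then (1 : 𝕜) else 0) (F : Finset ℕ) :
    F ∈ 𝓕 ↔ ‖∑ i ∈ F, eStar i‖ * ‖∑ i ∈ F, b i‖ ≤ F.card :=
  ⟨hX.norm_sum_dual_mul_le_card hsym heStar, fun h => by_contra fun hF =>
    (hX.card_lt_norm_sum_dual_mul_of_notMem hsu h𝓕 heStar hF).not_ge h⟩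

end Duality

section Transport

variable {𝕜 : Type*} [RCLike 𝕜] {ι κ : Type*} [DecidableEq κ] {σ : ι → κ}

lemma LinearIsometry.norm_sum_image_eq {V₁ V₂ : Type*} [SeminormedAddCommGroup V₁]
    [NormedSpace 𝕜 V₁] [SeminormedAddCommGroup V₂] [NormedSpace 𝕜 V₂] (J : V₁ →ₗᵢ[𝕜] V₂)
    (hσ : σ.Injective) {v₁ : ι → V₁} {v₂ : κ → V₂} (hJ : ∀ i, J (v₁ i) = v₂ (σ i))
    (F : Finset ι) : ‖∑ j ∈ F.image σ, v₂ j‖ = ‖∑ i ∈ F, v₁ i‖ := by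
  rw [Finset.sum_image hσ.injOn, ← J.norm_map, map_sum]
  simp only [hJ]

lemma LinearIsometry.norm_sum_image_eq_of_submodule {Y₁ Y₂ : Type*} [NormedAddCommGroup Y₁]
    [NormedSpace 𝕜 Y₁] [NormedAddCommGroup Y₂] [NormedSpace 𝕜 Y₂] {M₁ : Submodule 𝕜 Y₁}
    {M₂ : Submodule 𝕜 Y₂} (J : M₁ →ₗᵢ[𝕜] M₂) (hσ : σ.Injective) {v₁ : ι → Y₁}
    (hv₁ : ∀ i, v₁ i ∈ M₁) {v₂ : κ → Y₂} (hJ : ∀ i, (J ⟨v₁ i, hv₁ i⟩ : Y₂) = v₂ (σ i))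
    (F : Finset ι) : ‖∑ j ∈ F.image σ, v₂ j‖ = ‖∑ i ∈ F, v₁ i‖ := by
  rw [Finset.sum_image hσ.injOn]
  calc ‖∑ i ∈ F, v₂ (σ i)‖ = ‖J (∑ i ∈ F, ⟨v₁ i, hv₁ i⟩)‖ := by
        simp only [map_sum, ← hJ, Submodule.coe_norm, Submodule.coe_sum]
    _ = ‖∑ i ∈ F, v₁ i‖ := by
        rw [J.norm_map, Submodule.coe_norm, Submodule.coe_sum]

lemma Finset.forall_ssubset_image_iff {α β : Type*} [DecidableEq β] {f : α → β}
    (hf : f.Injective) (s : Finset α) (P : Finset β → Prop) :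
    (∀ t ⊂ s.image f, P t) ↔ ∀ t ⊂ s, P (t.image f) := by
  refine ⟨fun h t ht => h _ ((image_ssubset_image hf).mpr ht), fun h t ht => ?_⟩
  obtain ⟨t, -, rfl⟩ := subset_image_iff.mp ht.subset
  exact h t ((image_ssubset_image hf).mp ht)

lemma Equiv.image_finsetImage_eq_of_forall_mem_iff {α β : Type*} [DecidableEq β] (π : α ≃ β)
    {𝓕₁ : Set (Finset α)} {𝓕₂ : Set (Finset β)} (h : ∀ F, F ∈ 𝓕₁ ↔ F.image π ∈ 𝓕₂) :
    (fun F : Finset α => F.image π) '' 𝓕₁ = 𝓕₂ := by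
  classical
  ext G
  obtain ⟨F, rfl⟩ : ∃ F : Finset α, F.image π = G :=
    ⟨G.image π.symm, by simp [Finset.image_image]⟩
  rw [(Finset.image_injective π.injective).mem_set_image, h]

end Transport

theorem permutation_inducing_isometry_is_compatible_general
    {𝕜 : Type*} [RCLike 𝕜]
    (E : Type*) [NormedAddCommGroup E] [NormedSpace 𝕜 E]
    (b : ℕ → E)
    (𝓕₁ 𝓕₂ : Set (Finset ℕ)) (h𝓕₁ : IsCombFamily 𝓕₁) (h𝓕₂ : IsCombFamily 𝓕₂)
    (X₁ : Type*) [NormedAddCommGroup X₁] [NormedSpace 𝕜 X₁]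
    (e₁ : ℕ → X₁) (hX₁ : IsXFE 𝕜 𝓕₁ E b X₁ e₁)
    (eStar₁ : ℕ → StrongDual 𝕜 X₁)
    (heStar₁ : ∀ i j, eStar₁ i (e₁ j) = if i = j then (1 : 𝕜) else 0)
    (X₂ : Type*) [NormedAddCommGroup X₂] [NormedSpace 𝕜 X₂]
    (e₂ : ℕ → X₂) (hX₂ : IsXFE 𝕜 𝓕₂ E b X₂ e₂)
    (eStar₂ : ℕ → StrongDual 𝕜 X₂)
    (heStar₂ : ∀ i j, eStar₂ i (e₂ j) = if i = j then (1 : 𝕜) else 0) :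
    (StrictlyUnconditional 𝕜 b →
      ∀ (π : Equiv.Perm ℕ) (J : X₁ ≃ₗᵢ[𝕜] X₂), (∀ i, J (e₁ i) = e₂ (π i)) →
        (fun F : Finset ℕ => Finset.image (⇑π) F) '' 𝓕₁ = 𝓕₂) ∧
    (StrictlyUnconditional 𝕜 b → IsSymmetricBasis 𝕜 b →
      ∀ (π : Equiv.Perm ℕ)
        (J : ↥((Submodule.span 𝕜 (Set.range eStar₁)).topologicalClosure) ≃ₗᵢ[𝕜]
          ↥((Submodule.span 𝕜 (Set.range eStar₂)).topologicalClosure)),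
        (∀ i, (J ⟨eStar₁ i,
            Submodule.le_topologicalClosure _
              (Submodule.subset_span (Set.mem_range_self i))⟩ : StrongDual 𝕜 X₂) =
          eStar₂ (π i)) →
        (fun F : Finset ℕ => Finset.image (⇑π) F) '' 𝓕₁ = 𝓕₂) := by
  refine ⟨fun hsu π J hJ => π.image_finsetImage_eq_of_forall_mem_iff fun F => ?_,
    fun hsu hsym π J hJ => π.image_finsetImage_eq_of_forall_mem_iff fun F => ?_⟩
  · rw [hX₁.mem_iff_forall_ssubset_norm_sum_lt hsu h𝓕₁,
      hX₂.mem_iff_forall_ssubset_norm_sum_lt hsu h𝓕₂, Finset.forall_ssubset_image_iff π.injective]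
    simp only [J.toLinearIsometry.norm_sum_image_eq π.injective hJ]
  · obtain ⟨T, hT⟩ := hsym π
    rw [hX₁.mem_iff_norm_sum_dual_mul_le_card hsu hsym h𝓕₁ heStar₁,
      hX₂.mem_iff_norm_sum_dual_mul_le_card hsu hsym h𝓕₂ heStar₂,
      J.toLinearIsometry.norm_sum_image_eq_of_submodule π.injective _ hJ,
      T.toLinearIsometry.norm_sum_image_eq π.injective hT,
      Finset.card_image_of_injective _ π.injective]

/-- Proposition (trucmachin), parts (1) and (2).
(1) If `(𝐞_i)` is strictly 1-unconditional, a permutation of `ℕ` inducing an isometry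
`X_{𝓕₁,E} → X_{𝓕₂,E}` (via `e_i ↦ e_{π(i)}`) satisfies `π(𝓕₁) = 𝓕₂`.
(2) If `(𝐞_i)` is strictly 1-unconditional and 1-symmetric, a permutation inducing an
isometry `Z_{𝓕₁,E} → Z_{𝓕₂,E}` (via `e_i^* ↦ e_{π(i)}^*`) satisfies `π(𝓕₁) = 𝓕₂`. -/
theorem permutation_inducing_isometry_is_compatible
    {𝕜 : Type*} [RCLike 𝕜]
    (E : Type*) [NormedAddCommGroup E] [NormedSpace 𝕜 E] [CompleteSpace E]
    (b : ℕ → E) (bs : ℕ → StrongDual 𝕜 E) (hE : IsNUBasis 𝕜 E b bs)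
    (𝓕₁ 𝓕₂ : Set (Finset ℕ)) (h𝓕₁ : IsCombFamily 𝓕₁) (h𝓕₂ : IsCombFamily 𝓕₂)
    (X₁ : Type*) [NormedAddCommGroup X₁] [NormedSpace 𝕜 X₁] [CompleteSpace X₁]
    (e₁ : ℕ → X₁) (hX₁ : IsXFE 𝕜 𝓕₁ E b X₁ e₁)
    (eStar₁ : ℕ → StrongDual 𝕜 X₁)
    (heStar₁ : ∀ i j, eStar₁ i (e₁ j) = if i = j then (1 : 𝕜) else 0)
    (X₂ : Type*) [NormedAddCommGroup X₂] [NormedSpace 𝕜 X₂] [CompleteSpace X₂]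
    (e₂ : ℕ → X₂) (hX₂ : IsXFE 𝕜 𝓕₂ E b X₂ e₂)
    (eStar₂ : ℕ → StrongDual 𝕜 X₂)
    (heStar₂ : ∀ i j, eStar₂ i (e₂ j) = if i = j then (1 : 𝕜) else 0) :
    (StrictlyUnconditional 𝕜 b →
      ∀ (π : Equiv.Perm ℕ) (J : X₁ ≃ₗᵢ[𝕜] X₂), (∀ i, J (e₁ i) = e₂ (π i)) →
        (fun F : Finset ℕ => Finset.image (⇑π) F) '' 𝓕₁ = 𝓕₂) ∧
    (StrictlyUnconditional 𝕜 b → IsSymmetricBasis 𝕜 b →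
      ∀ (π : Equiv.Perm ℕ)
        (J : ↥((Submodule.span 𝕜 (Set.range eStar₁)).topologicalClosure) ≃ₗᵢ[𝕜]
          ↥((Submodule.span 𝕜 (Set.range eStar₂)).topologicalClosure)),
        (∀ i, (J ⟨eStar₁ i,
            Submodule.le_topologicalClosure _
              (Submodule.subset_span (Set.mem_range_self i))⟩ : StrongDual 𝕜 X₂) =
          eStar₂ (π i)) →
        (fun F : Finset ℕ => Finset.image (⇑π) F) '' 𝓕₁ = 𝓕₂) :=
  permutation_inducing_isometry_is_compatible_general E b 𝓕₁ 𝓕₂ h𝓕₁ h𝓕₂ X₁ e₁ hX₁ eStar₁ heStar₁ X₂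
    e₂ hX₂ eStar₂ heStar₂
end
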